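/- arXiv:1409.7781 — 3 statements merged into one kernel-verified Lean document; each statement's English description precedes it below -/
import Mathlib

section
/- Let H be a complex Hilbert space with dim H ≥ 2 and let T be a nonzero bounded linear operator on H. Then m(T) = √((1 − ε̂(T))/(1 + ε̂(T))) · ‖T‖. -/
/-!
Write `M = ‖T‖`, `m = m(T)` and `ε₀ = (M² - m²) / (M² + m²)`, so that
`√((1 - ε₀) / (1 + ε₀)) = m / M`; the theorem is `ε̂(T) = ε₀`.

`T` is `ε₀`-AOP: for orthonormal `x, y` the Gram matrix of `Tx, Ty` is the compression of `T*T`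
to `span {x, y}`, so its spectrum lies in `[m², M²]`, and Wielandt's inequality bounds its
off-diagonal entry by `ε₀ ‖Tx‖ ‖Ty‖`.

Conversely, if `T` is `ε`-AOP and `z, w` are unit vectors with `⟪z, w⟫` real, then `z + w ⊥ z - w`;
comparing real parts in `⟪T(z + w), T(z - w)⟫` gives `(1 - ε) ‖Tz‖² ≤ (1 + ε) ‖Tw‖²`, and hence
`(1 - ε) M² ≤ (1 + ε) m²`.
-/

open scoped ComplexInnerProductSpace

noncomputable section

variable {H : Type*} [NormedAddCommGroup H] [InnerProductSpace ℂ H] [CompleteSpace H]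

/-- `T` is `ε`-approximately orthogonality preserving: orthogonal vectors are mapped to
`ε`-orthogonal vectors. -/
def IsAOP (T : H →L[ℂ] H) (ε : ℝ) : Prop :=
  ∀ x y : H, ⟪x, y⟫ = 0 → ‖⟪T x, T y⟫‖ ≤ ε * (‖T x‖ * ‖T y‖)

/-- `ε̂(T)`, the smallest `ε ∈ [0,1]` for which `T` is `ε`-AOP. -/
def epsHat (T : H →L[ℂ] H) : ℝ :=
  sInf {ε : ℝ | 0 ≤ ε ∧ ε ≤ 1 ∧ IsAOP T ε}

/-- The minimum modulus `m(T) = inf {‖T x‖ : ‖x‖ = 1}`. -/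
def minMod (T : H →L[ℂ] H) : ℝ :=
  sInf {r : ℝ | ∃ x : H, ‖x‖ = 1 ∧ ‖T x‖ = r}

/-- The set `ℂ𝒱` of scalar multiples of linear isometries of `H`. -/
def scalarIsoms (H : Type*) [NormedAddCommGroup H] [InnerProductSpace ℂ H] :
    Set (H →L[ℂ] H) :=
  {S | ∃ (c : ℂ) (V : H →L[ℂ] H), (∀ x : H, ‖V x‖ = ‖x‖) ∧ S = c • V}

/-- `dist(T, ℂ𝒱)`. -/
def distCV (T : H →L[ℂ] H) : ℝ := Metric.infDist T (scalarIsoms H)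

/-- The set `𝒱` of linear isometries of `H`. -/
def isoms (H : Type*) [NormedAddCommGroup H] [InnerProductSpace ℂ H] :
    Set (H →L[ℂ] H) :=
  {V | ∀ x : H, ‖V x‖ = ‖x‖}

/-- `dist(T, 𝒱)`. -/
def distV (T : H →L[ℂ] H) : ℝ := Metric.infDist T (isoms H)

theorem Complex.exists_norm_eq_one_mul_eq_norm (c : ℂ) : ∃ ω : ℂ, ‖ω‖ = 1 ∧ ω * c = ‖c‖ := by
  refine ⟨exp (-c.arg * I), by simpa using norm_exp_ofReal_mul_I (-c.arg), ?_⟩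
  calc exp (-c.arg * I) * c = exp (-c.arg * I) * (‖c‖ * exp (c.arg * I)) := by
        rw [norm_mul_exp_arg_mul_I]
    _ = ‖c‖ := by rw [mul_left_comm, ← exp_add, neg_mul, neg_add_cancel, exp_zero, mul_one]

section

variable {E F : Type*} [NormedAddCommGroup E] [InnerProductSpace ℂ E]
  [NormedAddCommGroup F] [InnerProductSpace ℂ F]

/-- Cauchy–Schwarz for the positive semidefinite Hermitian form `α ⟪T x, T y⟫ + β ⟪x, y⟫`. -/
theorem norm_sq_add_inner_le_of_nonneg (T : E →ₗ[ℂ] F) (α β : ℝ)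
    (h : ∀ z, 0 ≤ α * ‖T z‖ ^ 2 + β * ‖z‖ ^ 2) (x y : E) :
    ‖(α : ℂ) * ⟪T x, T y⟫ + (β : ℂ) * ⟪x, y⟫‖ ^ 2 ≤
      (α * ‖T x‖ ^ 2 + β * ‖x‖ ^ 2) * (α * ‖T y‖ ^ 2 + β * ‖y‖ ^ 2) := by
  set c := (α : ℂ) * ⟪T x, T y⟫ + (β : ℂ) * ⟪x, y⟫
  obtain ⟨ω, hω, hωc⟩ := c.exists_norm_eq_one_mul_eq_norm
  have hquad : ∀ t : ℝ, 0 ≤ (α * ‖T y‖ ^ 2 + β * ‖y‖ ^ 2) * (t * t) + 2 * ‖c‖ * t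
      + (α * ‖T x‖ ^ 2 + β * ‖x‖ ^ 2) := by
    intro t
    have hre : α * (ω * ⟪T x, T y⟫).re + β * (ω * ⟪x, y⟫).re = ‖c‖ := by
      rw [← Complex.ofReal_re ‖c‖, ← hωc]
      simp only [c, mul_add, Complex.add_re, mul_left_comm ω, Complex.re_ofReal_mul]
    have := h (x + ((t : ℂ) * ω) • y)
    simp only [map_add, map_smul, norm_add_sq (𝕜 := ℂ), norm_smul, inner_smul_right, mul_pow,
      norm_mul, Complex.norm_real, hω, Real.norm_eq_abs, sq_abs, mul_one,
      RCLike.re_to_complex, mul_assoc, Complex.re_ofReal_mul] at this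
    linear_combination this + 2 * t * hre
  have := discrim_le_zero hquad
  rw [discrim] at this
  linarith

end

/-- Wielandt's inequality for a `2 × 2` Hermitian matrix `[[p, c], [conj c, q]]` with `‖c‖ = r`:
the hypotheses say that its spectrum lies in `[a, b]`. -/
theorem wielandt_two_by_two {a b p q r : ℝ} (ha : 0 ≤ a) (hap : a ≤ p) (haq : a ≤ q)
    (hpb : p ≤ b) (hqb : q ≤ b) (hlow : r ^ 2 ≤ (p - a) * (q - a))
    (hupp : r ^ 2 ≤ (b - p) * (b - q)) :
    (b + a) ^ 2 * r ^ 2 ≤ (b - a) ^ 2 * (p * q) := by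
  have hab : a ≤ b := hap.trans hpb
  rcases le_total (p + q) (a + b) with h | h
  · nlinarith [mul_nonneg (sub_nonneg.2 h) (by nlinarith : 0 ≤ b * (p + q) - a * (a + b)),
      mul_le_mul_of_nonneg_left hlow (sq_nonneg (a + b)), sq_nonneg (p - q),
      mul_nonneg ha (ha.trans hab)]
  · nlinarith [mul_nonneg (sub_nonneg.2 h) (by nlinarith : 0 ≤ b * (a + b) - a * (p + q)),
      mul_le_mul_of_nonneg_left hupp (sq_nonneg (a + b)), sq_nonneg (p - q),
      mul_nonneg ha (ha.trans hab)]

section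

variable {E : Type*} [NormedAddCommGroup E] [InnerProductSpace ℂ E] {T : E →L[ℂ] E} {ε : ℝ}

variable (T) in
theorem minMod_nonneg : 0 ≤ minMod T :=
  Real.sInf_nonneg fun _ ⟨_, _, hr⟩ => hr ▸ norm_nonneg _

variable (T) in
theorem minMod_mul_norm_le (x : E) : minMod T * ‖x‖ ≤ ‖T x‖ := by
  rcases eq_or_ne x 0 with rfl | hx
  · simp
  have hx' : 0 < ‖x‖ := norm_pos_iff.2 hx
  have hunit : minMod T ≤ ‖T ((‖x‖ : ℂ)⁻¹ • x)‖ :=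
    csInf_le ⟨0, fun _ ⟨_, _, hr⟩ => hr ▸ norm_nonneg _⟩ ⟨_, norm_smul_inv_norm hx, rfl⟩
  rw [map_smul, norm_smul, norm_inv, Complex.norm_real, Real.norm_eq_abs, abs_norm] at hunit
  rwa [← le_div_iff₀ hx', div_eq_inv_mul]

variable (T) in
theorem minMod_le_opNorm [Nontrivial E] : minMod T ≤ ‖T‖ := by
  obtain ⟨x, hx⟩ := exists_norm_eq E zero_le_one
  simpa [hx] using (minMod_mul_norm_le T x).trans (T.le_opNorm x)

theorem mul_opNorm_le_minMod [Nontrivial E] {c : ℝ} (hc : 0 ≤ c)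
    (h : ∀ z w : E, ‖z‖ = 1 → ‖w‖ = 1 → c * ‖T z‖ ≤ ‖T w‖) : c * ‖T‖ ≤ minMod T := by
  obtain ⟨x, hx⟩ := exists_norm_eq E zero_le_one
  refine le_csInf ⟨_, x, hx, rfl⟩ fun _ ⟨w, hw, hr⟩ => hr ▸ ?_
  have : ‖(c : ℂ) • T‖ ≤ ‖T w‖ :=
    ContinuousLinearMap.opNorm_le_of_unit_norm (norm_nonneg _) fun z hz => by
      simpa [norm_smul, abs_of_nonneg hc] using h z w hz hw
  simpa [norm_smul, abs_of_nonneg hc] using this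

theorem isAOP_of_norm_eq_one
    (h : ∀ x y : E, ‖x‖ = 1 → ‖y‖ = 1 → ⟪x, y⟫ = 0 → ‖⟪T x, T y⟫‖ ≤ ε * (‖T x‖ * ‖T y‖)) :
    IsAOP T ε := by
  intro x y hxy
  rcases eq_or_ne x 0 with rfl | hx
  · simp
  rcases eq_or_ne y 0 with rfl | hy
  · simp
  have hunit := h _ _ (norm_smul_inv_norm (𝕜 := ℂ) hx) (norm_smul_inv_norm (𝕜 := ℂ) hy)
    (by simp [hxy])
  simp only [map_smul, inner_smul_left, inner_smul_right, norm_smul, norm_mul, norm_inv,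
    RCLike.norm_conj, RCLike.norm_ofReal, abs_norm] at hunit
  have hscaled : ‖x‖⁻¹ * ‖y‖⁻¹ * ‖⟪T x, T y⟫‖ ≤ ‖x‖⁻¹ * ‖y‖⁻¹ * (ε * (‖T x‖ * ‖T y‖)) := by
    linarith
  exact le_of_mul_le_mul_left hscaled (by positivity)

theorem IsAOP.one_sub_mul_sq_le (hT : IsAOP T ε) (hε : 0 ≤ ε) {u v : E}
    (huv : ⟪u + v, u - v⟫ = 0) : (1 - ε) * ‖T u‖ ^ 2 ≤ (1 + ε) * ‖T v‖ ^ 2 := by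
  have haop := hT _ _ huv
  have hre : RCLike.re ⟪T (u + v), T (u - v)⟫ = ‖T u‖ ^ 2 - ‖T v‖ ^ 2 := by
    have := inner_re_symm (𝕜 := ℂ) (T u) (T v)
    simp only [map_add, map_sub, inner_add_left, inner_sub_right, inner_self_eq_norm_sq]
    linarith
  have hpar : ‖T (u + v)‖ * ‖T (u - v)‖ ≤ ‖T u‖ ^ 2 + ‖T v‖ ^ 2 := by
    have := parallelogram_law_with_norm ℂ (T u) (T v)
    rw [← map_add, ← map_sub] at this
    nlinarith [sq_nonneg (‖T (u + v)‖ - ‖T (u - v)‖)]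
  nlinarith [RCLike.re_le_norm ⟪T (u + v), T (u - v)⟫, mul_le_mul_of_nonneg_left hpar hε]

theorem IsAOP.one_sub_mul_sq_le_of_norm_eq (hT : IsAOP T ε) (hε : 0 ≤ ε) {z w : E}
    (hzw : ‖z‖ = ‖w‖) : (1 - ε) * ‖T z‖ ^ 2 ≤ (1 + ε) * ‖T w‖ ^ 2 := by
  -- rotating `w` by a phase makes `⟪z, w⟫` real, so that `z + w ⊥ z - w`
  obtain ⟨ω, hω, hωc⟩ := (⟪z, w⟫).exists_norm_eq_one_mul_eq_norm
  have horth : ⟪z + ω • w, z - ω • w⟫ = 0 := by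
    have hzw' : ⟪z, ω • w⟫ = ‖⟪z, w⟫‖ := by rw [inner_smul_right, hωc]
    have hwz' : ⟪ω • w, z⟫ = ‖⟪z, w⟫‖ := by rw [← inner_conj_symm, hzw', Complex.conj_ofReal]
    simp only [inner_add_left, inner_sub_right, hzw', hwz', inner_self_eq_norm_sq_to_K, norm_smul,
      hω, one_mul, hzw]
    ring
  simpa [norm_smul, hω] using hT.one_sub_mul_sq_le hε horth

theorem IsAOP.one_sub_mul_sq_opNorm_le [Nontrivial E] (hT : IsAOP T ε) (hε₀ : 0 ≤ ε)
    (hε₁ : ε ≤ 1) : (1 - ε) * ‖T‖ ^ 2 ≤ (1 + ε) * minMod T ^ 2 := by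
  set c := Real.sqrt ((1 - ε) / (1 + ε))
  have hc : c ^ 2 = (1 - ε) / (1 + ε) := Real.sq_sqrt (div_nonneg (by linarith) (by linarith))
  have hcT : c * ‖T‖ ≤ minMod T := by
    refine mul_opNorm_le_minMod (Real.sqrt_nonneg _) fun z w hz hw => ?_
    rw [← pow_le_pow_iff_left₀ (by positivity) (norm_nonneg _) two_ne_zero, mul_pow, hc,
      div_mul_eq_mul_div, div_le_iff₀ (by linarith), mul_comm (‖T w‖ ^ 2)]
    exact hT.one_sub_mul_sq_le_of_norm_eq hε₀ (hz.trans hw.symm)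
  have := pow_le_pow_left₀ (by positivity) hcT 2
  rw [mul_pow, hc, div_mul_eq_mul_div, div_le_iff₀ (by linarith)] at this
  linarith

theorem isAOP_minMod (hT : T ≠ 0) :
    IsAOP T ((‖T‖ ^ 2 - minMod T ^ 2) / (‖T‖ ^ 2 + minMod T ^ 2)) := by
  refine isAOP_of_norm_eq_one fun x y hx hy hxy => ?_
  set m := minMod T
  have hm : 0 ≤ m := minMod_nonneg T
  have hbelow : ∀ z, 0 ≤ 1 * ‖T z‖ ^ 2 + -m ^ 2 * ‖z‖ ^ 2 := fun z => by
    nlinarith [minMod_mul_norm_le T z, mul_nonneg hm (norm_nonneg z)]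
  have habove : ∀ z, 0 ≤ -1 * ‖T z‖ ^ 2 + ‖T‖ ^ 2 * ‖z‖ ^ 2 := fun z => by
    nlinarith [T.le_opNorm z, norm_nonneg (T z)]
  have hlow := norm_sq_add_inner_le_of_nonneg T.toLinearMap _ _ hbelow x y
  have hupp := norm_sq_add_inner_le_of_nonneg T.toLinearMap _ _ habove x y
  simp only [ContinuousLinearMap.coe_coe, hxy, hx, hy, mul_zero, add_zero, one_pow, mul_one,
    one_mul, Complex.ofReal_one, Complex.ofReal_neg, neg_one_mul, norm_neg, ← sub_eq_add_neg,
    neg_add_eq_sub] at hlow hupp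
  have hmx : m ≤ ‖T x‖ := by simpa [hx] using minMod_mul_norm_le T x
  have hmy : m ≤ ‖T y‖ := by simpa [hy] using minMod_mul_norm_le T y
  have hxM : ‖T x‖ ≤ ‖T‖ := by simpa [hx] using T.le_opNorm x
  have hyM : ‖T y‖ ≤ ‖T‖ := by simpa [hy] using T.le_opNorm y
  have hW := wielandt_two_by_two (sq_nonneg m) (pow_le_pow_left₀ hm hmx 2)
    (pow_le_pow_left₀ hm hmy 2) (pow_le_pow_left₀ (norm_nonneg _) hxM 2)
    (pow_le_pow_left₀ (norm_nonneg _) hyM 2) hlow hupp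
  have hsq : ((‖T‖ ^ 2 + m ^ 2) * ‖⟪T x, T y⟫‖) ^ 2
      ≤ ((‖T‖ ^ 2 - m ^ 2) * (‖T x‖ * ‖T y‖)) ^ 2 := by
    linarith
  rw [pow_le_pow_iff_left₀ (by positivity) (mul_nonneg (by nlinarith) (by positivity))
    two_ne_zero] at hsq
  have hpos : 0 < ‖T‖ ^ 2 + m ^ 2 := by positivity
  rw [div_mul_eq_mul_div, le_div_iff₀ hpos]
  linarith

theorem epsHat_eq (hT : T ≠ 0) :
    epsHat T = (‖T‖ ^ 2 - minMod T ^ 2) / (‖T‖ ^ 2 + minMod T ^ 2) := by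
  obtain ⟨x, hx⟩ : ∃ x, T x ≠ 0 := by
    by_contra! h
    exact hT (ContinuousLinearMap.ext h)
  have : Nontrivial E := nontrivial_of_ne x 0 fun h => hx (by simp [h])
  have hm := minMod_nonneg T
  have hmM := minMod_le_opNorm T
  have hpos : 0 < ‖T‖ ^ 2 + minMod T ^ 2 := by positivity
  refine IsLeast.csInf_eq ⟨⟨?_, ?_, isAOP_minMod hT⟩, fun δ ⟨hδ₀, hδ₁, hδ⟩ => ?_⟩
  · exact div_nonneg (by nlinarith) hpos.le
  · exact (div_le_one hpos).2 (by nlinarith)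
  · have := hδ.one_sub_mul_sq_opNorm_le hδ₀ hδ₁
    rw [div_le_iff₀ hpos]
    linarith

end

theorem minMod_eq_general (T : H →L[ℂ] H) (hT : T ≠ 0) :
    minMod T = Real.sqrt ((1 - epsHat T) / (1 + epsHat T)) * ‖T‖ := by
  have hM : 0 < ‖T‖ := norm_pos_iff.2 hT
  have hratio : (1 - epsHat T) / (1 + epsHat T) = (minMod T / ‖T‖) ^ 2 := by
    rw [epsHat_eq hT]
    field_simp
    ring
  rw [hratio, Real.sqrt_sq (div_nonneg (minMod_nonneg T) hM.le), div_mul_cancel₀ _ hM.ne']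

/-- `m(T) = √((1 − ε̂(T))/(1 + ε̂(T))) ‖T‖` for nonzero `T`. -/
theorem minMod_eq (hdim : 2 ≤ Module.rank ℂ H) (T : H →L[ℂ] H) (hT : T ≠ 0) :
    minMod T = Real.sqrt ((1 - epsHat T) / (1 + epsHat T)) * ‖T‖ :=
  minMod_eq_general T hT
end
end

section
/- Let H be a complex Hilbert space and T a bounded linear operator on H that is right invertible (TS = 1 for some bounded operator S) but not invertible. Then 0 < m(T*) ≤ dist(T, ℂ𝒱) ≤ ‖T‖, where T* is the adjoint of T. -/
open scoped ComplexInnerProductSpace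

noncomputable section

variable {H : Type*} [NormedAddCommGroup H] [InnerProductSpace ℂ H] [CompleteSpace H]

/-!
Since `S† T† = 1`, the adjoint `T†` is bounded below by `m = m(T†) > 0`, so `T T†` is invertible
and `R = T† (T T†)⁻¹` is a right inverse of `T` with `‖R‖ ≤ m⁻¹`; being surjective but not
invertible, `T` also kills some `x₀ ≠ 0`. For an isometry `V`, the operator `A = V† T` inherits
both: `A (R V) = 1` and `A x₀ = 0`. A Neumann series then makes every `λ` with `|λ| < m` an
eigenvalue of `A`, hence `‖T - c V‖ ≥ ‖A - c‖ ≥ sup_{|λ| < m} |λ - c| ≥ m`.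
The upper bound holds because `0 ∈ ℂ𝒱`.
-/

open ContinuousLinearMap
open scoped InnerProductSpace

/-- One of `±t` lies at distance at least `t` from `c`. -/
theorem le_of_forall_norm_lt_norm_sub_le {𝕜 : Type*} [RCLike 𝕜] {m N : ℝ} (hm : 0 < m) (c : 𝕜)
    (h : ∀ l : 𝕜, ‖l‖ < m → ‖l - c‖ ≤ N) : m ≤ N := by
  by_contra! hNm
  have hN : 0 ≤ N := (norm_nonneg _).trans (h 0 (by simpa using hm))
  obtain ⟨t, hNt, htm⟩ := exists_between hNm
  have ht : ‖(t : 𝕜)‖ < m := by rwa [RCLike.norm_ofReal, abs_of_nonneg (by linarith)]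
  have h2t : ‖((t : 𝕜) - c) - (-(t : 𝕜) - c)‖ = 2 * t := by
    rw [sub_sub_sub_cancel_right, sub_neg_eq_add, ← two_mul, norm_mul, RCLike.norm_ofReal,
      abs_of_nonneg (by linarith), RCLike.norm_two]
  have := norm_sub_le ((t : 𝕜) - c) (-(t : 𝕜) - c)
  linarith [h _ ht, h (-(t : 𝕜)) (by rwa [norm_neg])]

section Spectral

variable {𝕜 E : Type*} [RCLike 𝕜] [NormedAddCommGroup E] [NormedSpace 𝕜 E]

/-- `x = (1 - l R)⁻¹ x₀` is a nonzero solution of `x = x₀ + l R x`, hence `A x = l x`. -/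
theorem exists_apply_eq_smul_of_comp_eq_one [CompleteSpace E] {A R : E →L[𝕜] E}
    (hAR : A ∘L R = 1) {x₀ : E} (hx₀ : x₀ ≠ 0) (hAx₀ : A x₀ = 0) {l : 𝕜} (hl : ‖l • R‖ < 1) :
    ∃ x : E, x ≠ 0 ∧ A x = l • x := by
  set u := Units.oneSub (l • R) hl
  set x := (↑u⁻¹ : E →L[𝕜] E) x₀
  have hx : x - l • R x = x₀ := by
    simpa [u, Units.val_oneSub] using congrArg (fun f : E →L[𝕜] E => f x₀) u.mul_inv
  refine ⟨x, fun h => hx₀ (by simpa [h] using hx.symm), ?_⟩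
  have hAR' : A (R x) = x := by simpa using congrArg (fun f : E →L[𝕜] E => f x) hAR
  calc A x = A (x₀ + l • R x) := by rw [← hx, sub_add_cancel]
    _ = l • x := by rw [map_add, map_smul, hAx₀, hAR', zero_add]

theorem norm_sub_le_opNorm_sub_smul_one {A : E →L[𝕜] E} {x : E} (hx : x ≠ 0) {l : 𝕜}
    (hAx : A x = l • x) (c : 𝕜) : ‖l - c‖ ≤ ‖A - c • 1‖ := by
  have h : ‖l - c‖ * ‖x‖ ≤ ‖A - c • 1‖ * ‖x‖ := by
    simpa [hAx, ← sub_smul, norm_smul] using (A - c • 1).le_opNorm x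
  exact le_of_mul_le_mul_right h (norm_pos_iff.mpr hx)

theorem le_opNorm_sub_smul_one_of_comp_eq_one [CompleteSpace E] {A R : E →L[𝕜] E}
    (hAR : A ∘L R = 1) {m : ℝ} (hm : 0 < m) (hR : ‖R‖ ≤ m⁻¹) {x₀ : E} (hx₀ : x₀ ≠ 0)
    (hAx₀ : A x₀ = 0) (c : 𝕜) : m ≤ ‖A - c • 1‖ := by
  refine le_of_forall_norm_lt_norm_sub_le hm c fun l hl => ?_
  have hlR : ‖l • R‖ < 1 :=
    calc ‖l • R‖ ≤ ‖l‖ * m⁻¹ := (norm_smul_le l R).trans (by gcongr)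
      _ < 1 := by rwa [← div_eq_mul_inv, div_lt_one hm]
  obtain ⟨x, hx, hAx⟩ := exists_apply_eq_smul_of_comp_eq_one hAR hx₀ hAx₀ hlR
  exact norm_sub_le_opNorm_sub_smul_one hx hAx c

end Spectral

section Hilbert

variable {𝕜 E F : Type*} [RCLike 𝕜] [NormedAddCommGroup E] [InnerProductSpace 𝕜 E]
  [CompleteSpace E] [NormedAddCommGroup F] [InnerProductSpace 𝕜 F] [CompleteSpace F]

/-- The right inverse `T† (T T†)⁻¹` of `T` has norm at most `m⁻¹`. -/
theorem exists_comp_eq_one_norm_le_of_adjoint {T : E →L[𝕜] F} {m : ℝ} (hm : 0 < m)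
    (hT : ∀ y, m * ‖y‖ ≤ ‖adjoint T y‖) : ∃ R : F →L[𝕜] E, T ∘L R = 1 ∧ ‖R‖ ≤ m⁻¹ := by
  set G := T ∘L adjoint T
  have hG : ∀ y, ‖adjoint T y‖ ^ 2 = RCLike.re ⟪G y, y⟫_𝕜 := fun y => by
    simpa [G] using apply_norm_sq_eq_inner_adjoint_left (adjoint T) y
  have hGunit : IsUnit G := by
    refine isUnit_of_forall_le_norm_inner_map G (c := ⟨m ^ 2, by positivity⟩)
      (show (0 : ℝ) < m ^ 2 by positivity) fun y => ?_
    calc ‖y‖ ^ 2 * m ^ 2 = (m * ‖y‖) ^ 2 := by ring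
      _ ≤ ‖adjoint T y‖ ^ 2 := by gcongr; exact hT y
      _ ≤ ‖⟪G y, y⟫_𝕜‖ := (hG y).trans_le (RCLike.re_le_norm _)
  refine ⟨adjoint T ∘L Ring.inverse G,
    by rw [← comp_assoc]; exact Ring.mul_inverse_cancel G hGunit,
    opNorm_le_bound _ (by positivity) fun y => ?_⟩
  set z := Ring.inverse G y
  have hGz : G z = y := by
    simpa using DFunLike.congr_fun (Ring.mul_inverse_cancel G hGunit) y
  have hsq : m * ‖adjoint T z‖ * ‖adjoint T z‖ ≤ ‖y‖ * ‖adjoint T z‖ :=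
    calc m * ‖adjoint T z‖ * ‖adjoint T z‖ = m * RCLike.re ⟪y, z⟫_𝕜 := by
          rw [mul_assoc, ← sq, hG, hGz]
      _ ≤ m * (‖y‖ * ‖z‖) := by
          gcongr; exact (RCLike.re_le_norm _).trans (norm_inner_le_norm _ _)
      _ ≤ ‖y‖ * ‖adjoint T z‖ := by nlinarith [hT z, norm_nonneg y]
  change ‖adjoint T z‖ ≤ m⁻¹ * ‖y‖
  rcases (norm_nonneg (adjoint T z)).eq_or_lt with h0 | hpos
  · rw [← h0]; positivity
  · rw [← div_eq_inv_mul, le_div_iff₀ hm, mul_comm]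
    exact le_of_mul_le_mul_right hsq hpos

/-- Compressing by `adjoint V` turns `T - c • V` into `adjoint V ∘L T - c • 1`, which inherits
the kernel vector and the small right inverse of `T`. -/
theorem le_opNorm_sub_smul_of_isometry {T R V : E →L[𝕜] E} (hTR : T ∘L R = 1) {m : ℝ}
    (hm : 0 < m) (hR : ‖R‖ ≤ m⁻¹) {x₀ : E} (hx₀ : x₀ ≠ 0) (hTx₀ : T x₀ = 0)
    (hV : ∀ x, ‖V x‖ = ‖x‖) (c : 𝕜) : m ≤ ‖T - c • V‖ := by
  have hVV : adjoint V ∘L V = 1 := (norm_map_iff_adjoint_comp_self V).mp hV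
  have hV1 : ‖V‖ ≤ 1 := opNorm_le_bound V zero_le_one fun x => by rw [hV, one_mul]
  have hA : (adjoint V ∘L T) ∘L (R ∘L V) = 1 := by
    rw [comp_assoc, ← comp_assoc T, hTR]
    exact hVV
  have hRV : ‖R ∘L V‖ ≤ m⁻¹ :=
    (opNorm_comp_le R V).trans (mul_le_of_le_one_right (norm_nonneg R) hV1 |>.trans hR)
  calc m ≤ ‖adjoint V ∘L T - c • 1‖ :=
        le_opNorm_sub_smul_one_of_comp_eq_one hA hm hRV hx₀ (by simp [hTx₀]) c
    _ = ‖adjoint V ∘L (T - c • V)‖ := by rw [comp_sub, comp_smul, hVV]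
    _ ≤ ‖adjoint V‖ * ‖T - c • V‖ := opNorm_comp_le _ _
    _ ≤ ‖T - c • V‖ := by
      rw [LinearIsometryEquiv.norm_map]
      exact mul_le_of_le_one_left (norm_nonneg _) hV1

end Hilbert

section

variable {K : Type*} [NormedAddCommGroup K] [InnerProductSpace ℂ K]

theorem minMod_mul_norm_le_s13 (B : K →L[ℂ] K) (x : K) : minMod B * ‖x‖ ≤ ‖B x‖ := by
  rcases eq_or_ne x 0 with rfl | hx
  · simp
  have hle : minMod B ≤ ‖B ((‖x‖⁻¹ : ℂ) • x)‖ :=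
    csInf_le ⟨0, by rintro _ ⟨y, -, rfl⟩; exact norm_nonneg _⟩ ⟨_, norm_smul_inv_norm hx, rfl⟩
  rwa [map_smul, norm_smul, norm_inv, Complex.norm_real, norm_norm, inv_mul_eq_div,
    le_div_iff₀ (norm_pos_iff.mpr hx)] at hle

theorem le_minMod [Nontrivial K] {B : K →L[ℂ] K} {c : ℝ} (h : ∀ x, c * ‖x‖ ≤ ‖B x‖) :
    c ≤ minMod B := by
  obtain ⟨x, hx⟩ := exists_norm_eq K zero_le_one
  exact le_csInf ⟨_, x, hx, rfl⟩ fun _ ⟨y, hy, hBy⟩ => by simpa [hy, hBy] using h y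

theorem minMod_pos_of_comp_eq_one [Nontrivial K] {B L : K →L[ℂ] K} (h : L ∘L B = 1) :
    0 < minMod B := by
  have hL : 0 < ‖L‖ := norm_pos_iff.mpr fun hL0 => one_ne_zero (by rw [← h, hL0, zero_comp])
  refine (inv_pos.mpr hL).trans_le (le_minMod fun x => ?_)
  rw [inv_mul_le_iff₀ hL]
  calc ‖x‖ = ‖L (B x)‖ := by rw [← comp_apply, h]; rfl
    _ ≤ ‖L‖ * ‖B x‖ := L.le_opNorm _

theorem zero_mem_scalarIsoms : (0 : K →L[ℂ] K) ∈ scalarIsoms K :=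
  ⟨0, 1, fun _ => rfl, (zero_smul ℂ _).symm⟩

end

/-- If `T` is right invertible but not invertible, then `0 < m(T*) ≤ dist(T, ℂ𝒱) ≤ ‖T‖`. -/
theorem distCV_right_invertible (T : H →L[ℂ] H)
    (hright : ∃ S : H →L[ℂ] H, T ∘L S = 1) (hninv : ¬ IsUnit T) :
    0 < minMod (ContinuousLinearMap.adjoint T) ∧
      minMod (ContinuousLinearMap.adjoint T) ≤ distCV T ∧ distCV T ≤ ‖T‖ := by
  obtain ⟨S, hS⟩ := hright
  have : Nontrivial H := by
    by_contra h
    rw [not_nontrivial_iff_subsingleton] at h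
    exact hninv (isUnit_of_subsingleton T)
  have hsurj : Function.Surjective T := fun y => ⟨S y, by simpa using DFunLike.congr_fun hS y⟩
  obtain ⟨x₀, hTx₀, hx₀⟩ : ∃ x, T x = 0 ∧ x ≠ 0 := by
    have : ¬ Function.Injective T := fun hinj => hninv (isUnit_iff_bijective.mpr ⟨hinj, hsurj⟩)
    simpa [injective_iff_map_eq_zero] using this
  have hm : 0 < minMod (adjoint T) :=
    minMod_pos_of_comp_eq_one (L := adjoint S) (by rw [← adjoint_comp, hS, adjoint_one])
  obtain ⟨R, hTR, hR⟩ := exists_comp_eq_one_norm_le_of_adjoint hm (minMod_mul_norm_le_s13 _)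
  refine ⟨hm, ?_, ?_⟩
  · rw [distCV, Metric.le_infDist ⟨0, zero_mem_scalarIsoms⟩]
    rintro _ ⟨c, V, hV, rfl⟩
    rw [dist_eq_norm]
    exact le_opNorm_sub_smul_of_isometry hTR hm hR hx₀ hTx₀ hV c
  · exact (Metric.infDist_le_dist_of_mem zero_mem_scalarIsoms).trans_eq (dist_zero_right T)
end
end

section
/- Let H be a complex Hilbert space with dim H ≥ 2 and let (Tₙ) be a sequence of nonzero bounded linear operators on H with ε̂(Tₙ) → 0. Then dist(Tₙ/‖Tₙ‖, 𝒱) → 0, where 𝒱 is the set of linear isometries on H and dist(A, 𝒱) = inf{‖A − V‖ : V ∈ 𝒱}. -/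
/-!
If `T` is `ε`-AOP and `x`, `z` are orthonormal, then `x + z ⊥ x - z`, and the real part of
`⟪T (x + z), T (x - z)⟫` is `‖T x‖² - ‖T z‖²`; so all unit vectors have images of almost the same
length. Splitting an arbitrary `y` along a unit vector `x` gives
`(1 - 3ε) ‖T‖² ‖y‖² ≤ ‖T y‖²`. Hence `S = T / ‖T‖` satisfies `(1 - 3ε) ‖y‖² ≤ ‖S y‖² ≤ ‖y‖²`,
the spectrum of `S† S` lies in `[1 - 3ε, 1]`, and the isometry `S (S† S)^{-1/2}` of the polar
decomposition of `S` is within `(1 - 3ε)^{-1/2} - 1` of `S`. The infimum `ε̂(T)` is itself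
admissible, since the admissible `ε` form a closed set.
-/

open scoped ComplexInnerProductSpace

noncomputable section

variable {H : Type*} [NormedAddCommGroup H] [InnerProductSpace ℂ H] [CompleteSpace H]

lemma one_le_inv_sqrt {s : ℝ} (hs : 0 < s) (hs1 : s ≤ 1) : 1 ≤ (√s)⁻¹ :=
  (one_le_inv₀ (Real.sqrt_pos.mpr hs)).mpr (Real.sqrt_le_one.mpr hs1)

lemma norm_one_sub_inv_sqrt_le {t s : ℝ} (ht : 0 < t) (hts : t ≤ s) (hs1 : s ≤ 1) :
    ‖1 - (√s)⁻¹‖ ≤ (√t)⁻¹ - 1 := by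
  rw [Real.norm_eq_abs, abs_sub_comm, abs_of_nonneg (sub_nonneg.mpr
    (one_le_inv_sqrt (ht.trans_le hts) hs1))]
  exact sub_le_sub_right (inv_anti₀ (Real.sqrt_pos.mpr ht) (Real.sqrt_le_sqrt hts)) 1

namespace ContinuousLinearMap

lemma sq_opNorm_le_of_unit_norm {E F : Type*} [NormedAddCommGroup E]
    [NormedSpace ℂ E] [NormedAddCommGroup F] [NormedSpace ℂ F] (f : E →L[ℂ] F) {C : ℝ}
    (hC : 0 ≤ C) (hf : ∀ x, ‖x‖ = 1 → ‖f x‖ ^ 2 ≤ C) : ‖f‖ ^ 2 ≤ C :=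
  (Real.le_sqrt (norm_nonneg f) hC).mp <| f.opNorm_le_of_unit_norm (Real.sqrt_nonneg C)
    fun x hx => (Real.le_sqrt (norm_nonneg _) hC).mpr (hf x hx)

open scoped InnerProduct

variable {E F : Type*} [NormedAddCommGroup E] [InnerProductSpace ℂ E]
  [NormedAddCommGroup F] [InnerProductSpace ℂ F]

lemma re_inner_algebraMap_apply (c : ℝ) (x : E) :
    RCLike.re ⟪algebraMap ℝ (E →L[ℂ] E) c x, x⟫ = c * ‖x‖ ^ 2 := by
  simp [Algebra.algebraMap_eq_smul_one, ← Complex.ofReal_pow]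

variable [CompleteSpace E] [CompleteSpace F]

lemma le_iff_re_inner_le {T U : E →L[ℂ] E} (hT : IsSelfAdjoint T) (hU : IsSelfAdjoint U) :
    T ≤ U ↔ ∀ x, RCLike.re ⟪T x, x⟫ ≤ RCLike.re ⟪U x, x⟫ := by
  simp only [le_def, isPositive_def', hU.sub hT, true_and, reApplyInnerSelf_apply, sub_apply,
    inner_sub_left, map_sub, sub_nonneg]

lemma re_inner_adjoint_comp_self_apply (S : E →L[ℂ] F) (x : E) :
    RCLike.re ⟪(S† ∘L S) x, x⟫ = ‖S x‖ ^ 2 := by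
  rw [comp_apply, adjoint_inner_left, inner_self_eq_norm_sq]

lemma spectrum_adjoint_comp_self_subset_Icc (S : E →L[ℂ] F) {a b : ℝ}
    (ha : ∀ x, a * ‖x‖ ^ 2 ≤ ‖S x‖ ^ 2) (hb : ∀ x, ‖S x‖ ^ 2 ≤ b * ‖x‖ ^ 2) :
    spectrum ℝ (S† ∘L S) ⊆ Set.Icc a b := by
  have hA : IsSelfAdjoint (S† ∘L S) := (isPositive_adjoint_comp_self S).isSelfAdjoint
  have hsa (c : ℝ) : IsSelfAdjoint (algebraMap ℝ (E →L[ℂ] E) c) :=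
    IsSelfAdjoint.algebraMap _ (.all c)
  intro s hs
  refine ⟨(algebraMap_le_iff_le_spectrum hA).mp ?_ s hs,
    (le_algebraMap_iff_spectrum_le hA).mp ?_ s hs⟩
  · rw [le_iff_re_inner_le (hsa a) hA]
    simpa only [re_inner_algebraMap_apply, re_inner_adjoint_comp_self_apply] using ha
  · rw [le_iff_re_inner_le hA (hsa b)]
    simpa only [re_inner_algebraMap_apply, re_inner_adjoint_comp_self_apply] using hb

theorem exists_isometry_norm_sub_le (S : E →L[ℂ] F) (hS : ‖S‖ ≤ 1) {t : ℝ} (ht : 0 < t)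
    (ht1 : t ≤ 1) (hlow : ∀ x, t * ‖x‖ ^ 2 ≤ ‖S x‖ ^ 2) :
    ∃ V : E →L[ℂ] F, (∀ x, ‖V x‖ = ‖x‖) ∧ ‖S - V‖ ≤ (√t)⁻¹ - 1 := by
  set A := S† ∘L S
  have hA : IsSelfAdjoint A := (isPositive_adjoint_comp_self S).isSelfAdjoint
  have hspec : spectrum ℝ A ⊆ Set.Icc t 1 :=
    spectrum_adjoint_comp_self_subset_Icc S hlow fun x => by
      simpa using pow_le_pow_left₀ (norm_nonneg _) (S.le_of_opNorm_le hS x) 2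
  have hpos : ∀ s ∈ spectrum ℝ A, 0 < s := fun s hs => ht.trans_le (hspec hs).1
  -- `V = S A^{-1/2}` is the isometric part of the polar decomposition of `S`
  set g : ℝ → ℝ := fun s => (√s)⁻¹
  have hg : ContinuousOn g (spectrum ℝ A) :=
    Real.continuous_sqrt.continuousOn.inv₀ fun s hs => (Real.sqrt_pos.mpr (hpos s hs)).ne'
  set B := cfc g A
  have hBAB : B * A * B = 1 := by
    rw [← cfc_id' ℝ A, ← cfc_mul _ _ A hg,
      ← cfc_mul (fun s => g s * s) g A (hg.mul continuousOn_id) hg, ← cfc_const_one ℝ A]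
    refine cfc_congr fun s hs => ?_
    have := (Real.sqrt_pos.mpr (hpos s hs)).ne'
    simp only [g]
    field_simp
    exact (Real.sq_sqrt (hpos s hs).le).symm
  have hB : ∀ u v, ⟪B u, v⟫ = ⟪u, B v⟫ := (cfc_predicate g A : IsSelfAdjoint B).isSymmetric
  refine ⟨S ∘L B, fun x => ?_, ?_⟩
  · have h : ‖(S ∘L B) x‖ ^ 2 = ‖x‖ ^ 2 := by
      rw [comp_apply, ← re_inner_adjoint_comp_self_apply, ← inner_self_eq_norm_sq (𝕜 := ℂ),
        ← hB, show B (A (B x)) = (B * A * B) x from rfl, hBAB, one_apply_eq_self]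
    exact (sq_eq_sq₀ (norm_nonneg _) (norm_nonneg _)).mp h
  · have hsub : S - S ∘L B = S ∘L cfc (fun s => 1 - g s) A := by
      rw [cfc_sub _ _ A continuousOn_const hg, cfc_const_one ℝ A, comp_sub]
      rfl
    have hnorm : ‖cfc (fun s => 1 - g s) A‖ ≤ (√t)⁻¹ - 1 :=
      norm_cfc_le (sub_nonneg.mpr (one_le_inv_sqrt ht ht1)) fun s hs =>
        norm_one_sub_inv_sqrt_le ht (hspec hs).1 (hspec hs).2
    calc ‖S - S ∘L B‖ ≤ ‖S‖ * ‖cfc (fun s => 1 - g s) A‖ := hsub ▸ opNorm_comp_le _ _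
      _ ≤ 1 * ((√t)⁻¹ - 1) := by gcongr
      _ = (√t)⁻¹ - 1 := one_mul _

end ContinuousLinearMap

section AOP

variable {E : Type*} [NormedAddCommGroup E] [InnerProductSpace ℂ E]

lemma isAOP_one (T : E →L[ℂ] E) : IsAOP T 1 := fun x y _ => by
  simpa using norm_inner_le_norm (𝕜 := ℂ) (T x) (T y)

lemma isClosed_setOf_isAOP (T : E →L[ℂ] E) : IsClosed {ε | IsAOP T ε} := by
  simp only [IsAOP, Set.ofPred_forall]
  exact isClosed_iInter fun x => isClosed_iInter fun y => isClosed_iInter fun _ =>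
    isClosed_le continuous_const (continuous_id.mul continuous_const)

lemma epsHat_mem (T : E →L[ℂ] E) : epsHat T ∈ {ε : ℝ | 0 ≤ ε ∧ ε ≤ 1 ∧ IsAOP T ε} :=
  IsClosed.csInf_mem (isClosed_Ici.inter (isClosed_Iic.inter (isClosed_setOf_isAOP T)))
    ⟨1, zero_le_one, le_rfl, isAOP_one T⟩ ⟨0, fun _ hε => hε.1⟩

namespace IsAOP

variable {T : E →L[ℂ] E} {ε : ℝ}

lemma norm_apply_sq_le_of_inner_eq_zero (hT : IsAOP T ε) (hε : 0 ≤ ε) {x z : E}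
    (hxz : ⟪x, z⟫ = 0) (hn : ‖x‖ = ‖z‖) : ‖T x‖ ^ 2 ≤ ‖T z‖ ^ 2 + ε * (‖T x‖ ^ 2 + ‖T z‖ ^ 2) := by
  have hzx : ⟪z, x⟫ = 0 := by rw [← inner_conj_symm, hxz, map_zero]
  have horth : ⟪x + z, x - z⟫ = 0 := by
    rw [inner_add_left, inner_sub_right, inner_sub_right, hxz, hzx,
      inner_self_eq_norm_sq_to_K, inner_self_eq_norm_sq_to_K, hn]
    ring
  have hre : RCLike.re ⟪T (x + z), T (x - z)⟫ = ‖T x‖ ^ 2 - ‖T z‖ ^ 2 := by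
    rw [map_add, map_sub, inner_add_left, inner_sub_right, inner_sub_right, map_add, map_sub,
      map_sub, inner_self_eq_norm_sq, inner_self_eq_norm_sq, ← inner_conj_symm (T x) (T z),
      RCLike.conj_re]
    ring
  have hpar := parallelogram_law_with_norm ℂ (T x) (T z)
  rw [← map_add, ← map_sub] at hpar
  calc ‖T x‖ ^ 2 = ‖T z‖ ^ 2 + RCLike.re ⟪T (x + z), T (x - z)⟫ := by rw [hre]; ring
    _ ≤ ‖T z‖ ^ 2 + ε * (‖T (x + z)‖ * ‖T (x - z)‖) := by
      gcongr
      exact (RCLike.re_le_norm _).trans (hT _ _ horth)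
    _ ≤ ‖T z‖ ^ 2 + ε * (‖T x‖ ^ 2 + ‖T z‖ ^ 2) := by
      gcongr
      nlinarith [sq_nonneg (‖T (x + z)‖ - ‖T (x - z)‖)]

lemma norm_sq_mul_le_norm_apply_sq (hT : IsAOP T ε) (hε : 0 ≤ ε) {x : E} (hx : ‖x‖ = 1)
    (y : E) :
    ‖y‖ ^ 2 * (‖T x‖ ^ 2 - 3 * ε * ‖T‖ ^ 2) ≤ ‖T y‖ ^ 2 := by
  set γ : ℂ := ⟪x, y⟫
  set z : E := y - γ • x
  have hxz : ⟪x, z⟫ = 0 := by simp [z, γ, inner_self_eq_norm_sq_to_K, hx]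
  have hy : y = γ • x + z := by simp [z]
  have hyz : ‖y‖ ^ 2 = ‖γ‖ ^ 2 + ‖z‖ ^ 2 := by
    simp [hy, norm_add_sq (𝕜 := ℂ), inner_smul_left, hxz, norm_smul, hx]
  have hTy : ‖T y‖ ^ 2 = ‖γ‖ ^ 2 * ‖T x‖ ^ 2 + 2 * RCLike.re ⟪γ • T x, T z⟫ + ‖T z‖ ^ 2 := by
    rw [hy, map_add, map_smul, norm_add_sq (𝕜 := ℂ), norm_smul, mul_pow]
  have hcross : -(‖γ‖ * (ε * (‖T x‖ * ‖T z‖))) ≤ RCLike.re ⟪γ • T x, T z⟫ := by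
    refine neg_le_of_abs_le ((RCLike.abs_re_le_norm _).trans ?_)
    rw [inner_smul_left, norm_mul, RCLike.norm_conj]
    exact mul_le_mul_of_nonneg_left (hT x z hxz) (norm_nonneg γ)
  have hTz : ‖z‖ ^ 2 * ‖T x‖ ^ 2 ≤ ‖T z‖ ^ 2 + ε * (‖z‖ ^ 2 * ‖T x‖ ^ 2 + ‖T z‖ ^ 2) := by
    have h := hT.norm_apply_sq_le_of_inner_eq_zero hε (x := (‖z‖ : ℂ) • x) (z := z)
      (by rw [inner_smul_left, hxz, mul_zero]) (by simp [norm_smul, hx])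
    simpa [norm_smul, mul_pow] using h
  have hTx : ‖T x‖ ≤ ‖T‖ := by simpa [hx] using T.le_opNorm x
  have hTz' : ‖T z‖ ≤ ‖T‖ * ‖z‖ := T.le_opNorm z
  have hsum : ‖z‖ ^ 2 * ‖T x‖ ^ 2 + ‖T z‖ ^ 2 ≤ 2 * ‖z‖ ^ 2 * ‖T‖ ^ 2 := by
    nlinarith [mul_le_mul hTx hTx (norm_nonneg _) (norm_nonneg _),
      mul_le_mul hTz' hTz' (norm_nonneg _) (by positivity)]
  have hprod : 2 * ‖γ‖ * (‖T x‖ * ‖T z‖) ≤ (‖γ‖ ^ 2 + ‖z‖ ^ 2) * ‖T‖ ^ 2 := by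
    have h := mul_le_mul hTx hTz' (norm_nonneg _) (norm_nonneg _)
    nlinarith [sq_nonneg (‖γ‖ - ‖z‖), mul_le_mul_of_nonneg_left h (norm_nonneg γ)]
  rw [hyz, hTy]
  nlinarith [mul_le_mul_of_nonneg_left hsum hε, mul_le_mul_of_nonneg_left hprod hε,
    mul_nonneg (mul_nonneg hε (sq_nonneg ‖γ‖)) (sq_nonneg ‖T‖)]

lemma one_sub_mul_opNorm_sq_mul_le (hT : IsAOP T ε) (hε : 0 ≤ ε) (y : E) :
    (1 - 3 * ε) * ‖T‖ ^ 2 * ‖y‖ ^ 2 ≤ ‖T y‖ ^ 2 := by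
  have h := ((‖y‖ : ℂ) • T).sq_opNorm_le_of_unit_norm
    (C := ‖T y‖ ^ 2 + 3 * ε * ‖T‖ ^ 2 * ‖y‖ ^ 2) (by positivity) fun x hx => by
      have := hT.norm_sq_mul_le_norm_apply_sq hε hx y
      rw [smul_apply, norm_smul, Complex.norm_real, norm_norm]
      linarith
  rw [norm_smul, Complex.norm_real, norm_norm] at h
  linarith

end IsAOP

end AOP

theorem IsAOP.distV_smul_le {T : H →L[ℂ] H} {ε : ℝ} (hT : IsAOP T ε) (hε : 0 ≤ ε)
    (hε3 : ε < 1 / 3) (hT0 : T ≠ 0) :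
    distV ((‖T‖ : ℂ)⁻¹ • T) ≤ (√(1 - 3 * ε))⁻¹ - 1 := by
  set S := (‖T‖ : ℂ)⁻¹ • T
  have hTpos : 0 < ‖T‖ := norm_pos_iff.mpr hT0
  have hS : ‖S‖ ≤ 1 := by
    rw [norm_smul, norm_inv, Complex.norm_real, norm_norm, inv_mul_cancel₀ hTpos.ne']
  have hlow (x : H) : (1 - 3 * ε) * ‖x‖ ^ 2 ≤ ‖S x‖ ^ 2 := by
    rw [smul_apply, norm_smul, norm_inv, Complex.norm_real, norm_norm, mul_pow, inv_pow,
      ← div_eq_inv_mul, le_div_iff₀ (by positivity)]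
    linarith [hT.one_sub_mul_opNorm_sq_mul_le hε x]
  obtain ⟨V, hV, hSV⟩ :=
    ContinuousLinearMap.exists_isometry_norm_sub_le S hS (by linarith) (by linarith) hlow
  exact (Metric.infDist_le_dist_of_mem (show V ∈ isoms H from hV)).trans (by rwa [dist_eq_norm])

theorem distV_tendsto_zero_general
    (Tn : ℕ → H →L[ℂ] H) (hTn : ∀ n, Tn n ≠ 0)
    (heps : Filter.Tendsto (fun n => epsHat (Tn n)) Filter.atTop (nhds 0)) :
    Filter.Tendsto (fun n => distV ((‖Tn n‖ : ℂ)⁻¹ • Tn n)) Filter.atTop (nhds 0) := by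
  have hbound :
      Filter.Tendsto (fun n => (√(1 - 3 * epsHat (Tn n)))⁻¹ - 1) Filter.atTop (nhds 0) := by
    have h : ContinuousAt (fun t : ℝ => (√(1 - 3 * t))⁻¹ - 1) 0 :=
      ((Real.continuous_sqrt.comp (by fun_prop)).continuousAt.inv₀ (by simp)).sub continuousAt_const
    simpa [Function.comp_def] using h.tendsto.comp heps
  refine squeeze_zero' (Filter.Eventually.of_forall fun n => Metric.infDist_nonneg) ?_ hbound
  filter_upwards [heps.eventually_lt_const (by norm_num : (0 : ℝ) < 1 / 3)] with n hn
  obtain ⟨hε, -, hT⟩ := epsHat_mem (Tn n)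
  exact hT.distV_smul_le hε hn (hTn n)

/-- If `ε̂(Tₙ) → 0` for nonzero `Tₙ`, then `dist(Tₙ/‖Tₙ‖, 𝒱) → 0`. -/
theorem distV_tendsto_zero (hdim : 2 ≤ Module.rank ℂ H)
    (Tn : ℕ → H →L[ℂ] H) (hTn : ∀ n, Tn n ≠ 0)
    (heps : Filter.Tendsto (fun n => epsHat (Tn n)) Filter.atTop (nhds 0)) :
    Filter.Tendsto (fun n => distV ((‖Tn n‖ : ℂ)⁻¹ • Tn n)) Filter.atTop (nhds 0) :=
  distV_tendsto_zero_general Tn hTn heps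
end
end
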